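/- WKB T-estimate allowing Im V < 0 (Lemma 4.3). Let I = [u₀, u_max] and V : I → ℂ a C³ nonvanishing potential satisfying sup_I |V'| ≤ ε·inf_I |V|^{3/2}, sup_I |V''| ≤ ε²·inf_I |V|², sup_I |V'''| ≤ ε³·inf_I |V|^{5/2} with ε < 1/8. Let J = [u₀, u₁] ⊂ I and assume: (i) for all u ∈ J and τ ∈ [u₀, u], |V(τ)| ≥ ((τ−u₀)/(u−u₀))|V(u)| + ((u−τ)/(u−u₀))|V(u₀)|; (ii) Im √V > Re √V ≥ 0 on J; (iii) √|V| ≥ 200 ε² |J| · inf_I |V|² / |V(u₀)| on J; (iv) |J| · |Im V| · √|V| ≤ |V(u₀)|/30 on J. Then, with the WKB data ỹ = √V − V'/(4V) = α + iβ̃, Ṽ = V + 5(V')²/(16V²) − V''/(4V), U = Re(V−Ṽ) − β̃², and the choice g = 18 ε² inf_I |V|²/(|V|·|Im V|), Theorem 3.3 applies on J with T(u₀) = 1, and log T(u) ≤ 100 ε² · inf_I |V|² · ∫_{u₀}^{u} |V|^{−3/2} for all u ∈ J. -/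

import Mathlib

/-!
Write `r = √|V|`, `m = inf_I |V|` and `e = ε √m`, so that the semiclassical bounds read
`|V⁽ᵏ⁾| ≤ eᵏ m` with `e ≤ r / 8`. Then `|V' / (4V)| ≤ r / 32`, `|V - Ṽ| ≤ e²m / r²` and
`|(V - Ṽ)'| ≤ e²m / r`, while the branch condition forces `Im √V ≥ 7r / 10`, hence `β̃ ≥ 2r / 3`
and `U ≤ -r² / 4`. Each of `E₁, …, E₄` is then a bounded multiple of `e²m / r³ = ε²m² |V|^{-3/2}`,
the multiples adding up to less than 100, and integrating gives the bound on `log T`.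
The compatibility condition is automatic on `J`: `g ≥ 0`, `T ≥ 1`, and `Im V = 2 Re √V Im √V ≥ 0`.
-/

open Set

-- `V - Ṽ` and its derivative, in terms of the values of `V, V', V'', V'''` at a point
noncomputable def wkbDefect (z₀ z₁ z₂ : ℂ) : ℂ :=
  z₂ / (4 * z₀) - 5 * z₁ ^ 2 / (16 * z₀ ^ 2)

noncomputable def wkbDefectDeriv (z₀ z₁ z₂ z₃ : ℂ) : ℂ :=
  z₃ / (4 * z₀) - z₂ * z₁ / (4 * z₀ ^ 2) - 5 * z₁ * z₂ / (8 * z₀ ^ 2)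
    + 5 * z₁ ^ 3 / (8 * z₀ ^ 3)

theorem hasDerivAt_wkbDefect {f f' f'' : ℝ → ℂ} {z₃ : ℂ} {x : ℝ}
    (h₁ : HasDerivAt f (f' x) x) (h₂ : HasDerivAt f' (f'' x) x) (h₃ : HasDerivAt f'' z₃ x)
    (hx : f x ≠ 0) :
    HasDerivAt (fun t => wkbDefect (f t) (f' t) (f'' t))
      (wkbDefectDeriv (f x) (f' x) (f'' x) z₃) x := by
  have h := (h₃.div (h₁.const_mul 4) (by simpa using hx)).sub
    (((h₂.pow 2).const_mul 5).div ((h₁.pow 2).const_mul 16) (by simpa using hx))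
  refine h.congr_deriv ?_
  simp only [wkbDefectDeriv, Pi.pow_apply, Nat.cast_ofNat, Nat.add_one_sub_one, pow_one]
  field_simp
  ring

theorem hasDerivAt_re_wkbDefect {f f' f'' ft : ℝ → ℂ} {z₃ : ℂ} {x : ℝ}
    (hft : ∀ t, ft t = f t + 5 * f' t ^ 2 / (16 * f t ^ 2) - f'' t / (4 * f t))
    (h₁ : HasDerivAt f (f' x) x) (h₂ : HasDerivAt f' (f'' x) x) (h₃ : HasDerivAt f'' z₃ x)
    (hx : f x ≠ 0) :
    HasDerivAt (fun t => (f t - ft t).re) (wkbDefectDeriv (f x) (f' x) (f'' x) z₃).re x := by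
  have hfun : (fun t => f t - ft t) = fun t => wkbDefect (f t) (f' t) (f'' t) := by
    ext t; rw [hft, wkbDefect]; ring
  exact Complex.reCLM.hasFDerivAt.comp_hasDerivAt x (hfun ▸ hasDerivAt_wkbDefect h₁ h₂ h₃ hx)

section Bounds

variable {z₀ z₁ z₂ z₃ : ℂ} {e m r : ℝ}

theorem norm_div_four_mul_le (hr : 0 < r) (hz₀ : ‖z₀‖ = r ^ 2) (hmr : m ≤ r ^ 2)
    (he : 0 ≤ e) (her : e ≤ r / 8) (h₁ : ‖z₁‖ ≤ e * m) :
    ‖z₁ / (4 * z₀)‖ ≤ r / 32 := by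
  rw [norm_div, norm_mul, hz₀, div_le_iff₀ (by norm_num; positivity)]
  calc ‖z₁‖ ≤ e * r ^ 2 := h₁.trans (mul_le_mul_of_nonneg_left hmr he)
    _ ≤ r / 8 * r ^ 2 := by gcongr
    _ = r / 32 * (‖(4 : ℂ)‖ * r ^ 2) := by norm_num; ring

theorem norm_wkbDefect_le (hr : 0 < r) (hz₀ : ‖z₀‖ = r ^ 2) (hm : 0 ≤ m) (hmr : m ≤ r ^ 2)
    (h₁ : ‖z₁‖ ≤ e * m) (h₂ : ‖z₂‖ ≤ e ^ 2 * m) :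
    ‖wkbDefect z₀ z₁ z₂‖ ≤ e ^ 2 * m / r ^ 2 := by
  have h₁' : ‖z₁‖ ^ 2 ≤ e ^ 2 * m * r ^ 2 := by
    calc ‖z₁‖ ^ 2 ≤ (e * m) ^ 2 := by gcongr
      _ = e ^ 2 * m * m := by ring
      _ ≤ e ^ 2 * m * r ^ 2 := by gcongr
  calc ‖wkbDefect z₀ z₁ z₂‖ ≤ ‖z₂‖ / (4 * r ^ 2) + 5 * ‖z₁‖ ^ 2 / (16 * (r ^ 2) ^ 2) := by
        refine (norm_sub_le _ _).trans_eq ?_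
        simp [hz₀]
    _ ≤ e ^ 2 * m / (4 * r ^ 2) + 5 * (e ^ 2 * m * r ^ 2) / (16 * (r ^ 2) ^ 2) := by gcongr
    _ ≤ e ^ 2 * m / r ^ 2 := by
        field_simp
        nlinarith [sq_nonneg e]

theorem norm_wkbDefectDeriv_le (hr : 0 < r) (hz₀ : ‖z₀‖ = r ^ 2) (hm : 0 ≤ m)
    (hmr : m ≤ r ^ 2) (he : 0 ≤ e) (her : e ≤ r / 8) (h₁ : ‖z₁‖ ≤ e * m)
    (h₂ : ‖z₂‖ ≤ e ^ 2 * m) (h₃ : ‖z₃‖ ≤ e ^ 3 * m) :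
    ‖wkbDefectDeriv z₀ z₁ z₂ z₃‖ ≤ e ^ 2 * m / r := by
  have h₁r : ‖z₁‖ ≤ e * r ^ 2 := h₁.trans (by gcongr)
  have h₂₁ : ‖z₂‖ * ‖z₁‖ ≤ e ^ 3 * m * r ^ 2 :=
    (mul_le_mul h₂ h₁r (norm_nonneg _) (by positivity)).trans_eq (by ring)
  have h₁₁₁ : ‖z₁‖ ^ 3 ≤ e ^ 3 * m * r ^ 4 :=
    calc ‖z₁‖ ^ 3 = ‖z₁‖ * ‖z₁‖ ^ 2 := by ring
      _ ≤ (e * m) * (e * r ^ 2) ^ 2 := by gcongr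
      _ = e ^ 3 * m * r ^ 4 := by ring
  calc ‖wkbDefectDeriv z₀ z₁ z₂ z₃‖
      ≤ ‖z₃‖ / (4 * r ^ 2) + ‖z₂‖ * ‖z₁‖ / (4 * (r ^ 2) ^ 2)
        + 5 * (‖z₂‖ * ‖z₁‖) / (8 * (r ^ 2) ^ 2) + 5 * ‖z₁‖ ^ 3 / (8 * (r ^ 2) ^ 3) := by
        refine (norm_add_le _ _).trans (add_le_add ((norm_sub_le _ _).trans
          (add_le_add ((norm_sub_le _ _).trans_eq ?_) (le_of_eq ?_))) (le_of_eq ?_)) <;>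
          simp [hz₀]
        ring
    _ ≤ e ^ 3 * m / (4 * r ^ 2) + e ^ 3 * m * r ^ 2 / (4 * (r ^ 2) ^ 2)
        + 5 * (e ^ 3 * m * r ^ 2) / (8 * (r ^ 2) ^ 2)
        + 5 * (e ^ 3 * m * r ^ 4) / (8 * (r ^ 2) ^ 3) := by
        gcongr
    _ = 7 / 4 * e * (e ^ 2 * m / r ^ 2) := by field_simp; ring
    _ ≤ 7 / 4 * (r / 8) * (e ^ 2 * m / r ^ 2) := by gcongr
    _ ≤ e ^ 2 * m / r := by
        rw [show e ^ 2 * m / r = r * (e ^ 2 * m / r ^ 2) by field_simp]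
        gcongr
        linarith

end Bounds

theorem mul_norm_le_im_of_abs_re_le {s : ℂ} (hs : |s.re| ≤ s.im) : 7 / 10 * ‖s‖ ≤ s.im := by
  have him : 0 ≤ s.im := (abs_nonneg _).trans hs
  have hnorm : ‖s‖ ^ 2 ≤ 2 * s.im ^ 2 := by
    rw [Complex.sq_norm, Complex.normSq_apply]
    nlinarith [sq_abs s.re, abs_nonneg s.re]
  nlinarith [norm_nonneg s]

theorem re_im_sub_bounds_of_abs_re_le {s w : ℂ} {r : ℝ} (hsr : ‖s‖ = r) (hbr : |s.re| ≤ s.im)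
    (hw : ‖w‖ ≤ r / 32) :
    2 * r / 3 ≤ (s - w).im ∧ (s - w).im ≤ 2 * r ∧ |(s - w).re| ≤ 2 * r := by
  have hsim : 7 / 10 * r ≤ s.im := hsr ▸ mul_norm_le_im_of_abs_re_le hbr
  have hsim' : s.im ≤ r := hsr ▸ (le_abs_self _).trans (Complex.abs_im_le_norm s)
  have hsre := abs_le.1 (hsr ▸ Complex.abs_re_le_norm s)
  have hwre := abs_le.1 ((Complex.abs_re_le_norm w).trans hw)
  have hwim := abs_le.1 ((Complex.abs_im_le_norm w).trans hw)
  rw [Complex.sub_im, Complex.sub_re, abs_le]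
  exact ⟨by linarith, by linarith, by linarith, by linarith⟩

theorem im_sq_nonneg_of_nonneg {s : ℂ} (hre : 0 ≤ s.re) (him : 0 ≤ s.im) : 0 ≤ (s ^ 2).im := by
  rw [sq, Complex.mul_im]
  nlinarith

theorem abs_mul_div_mul_abs_le {w c v : ℝ} (hc : 0 ≤ c) (hv : 0 ≤ v) :
    |w| * (c / (v * |w|)) ≤ c / v := by
  rcases eq_or_ne w 0 with rfl | hw
  · simp only [abs_zero, zero_mul]; positivity
  · exact le_of_eq (by field_simp)

theorem Real.rpow_natCast_add_half {x : ℝ} (hx : 0 ≤ x) (n : ℕ) :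
    x ^ ((n : ℝ) + 1 / 2) = x ^ n * √x := by
  rw [Real.rpow_add' hx (by positivity), Real.rpow_natCast, Real.sqrt_eq_rpow]

theorem le_mul_sqrt_pow_mul_of_le_rpow {ε m a₁ a₂ a₃ : ℝ} (hm : 0 ≤ m)
    (h₁ : a₁ ≤ ε * m ^ ((3 : ℝ) / 2)) (h₂ : a₂ ≤ ε ^ 2 * m ^ 2)
    (h₃ : a₃ ≤ ε ^ 3 * m ^ ((5 : ℝ) / 2)) :
    a₁ ≤ ε * √m * m ∧ a₂ ≤ (ε * √m) ^ 2 * m ∧ a₃ ≤ (ε * √m) ^ 3 * m := by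
  have hsm : √m ^ 2 = m := Real.sq_sqrt hm
  rw [show (3 : ℝ) / 2 = (1 : ℕ) + 1 / 2 by norm_num, Real.rpow_natCast_add_half hm] at h₁
  rw [show (5 : ℝ) / 2 = (2 : ℕ) + 1 / 2 by norm_num, Real.rpow_natCast_add_half hm] at h₃
  refine ⟨h₁.trans_eq (by ring), h₂.trans_eq ?_, h₃.trans_eq ?_⟩
  · rw [mul_pow, hsm]; ring
  · rw [mul_pow, show √m ^ 3 = √m ^ 2 * √m by ring, hsm]; ring

theorem sq_rpow_neg_three_halves {r : ℝ} (hr : 0 < r) : (r ^ 2) ^ (-(3 : ℝ) / 2) = (r ^ 3)⁻¹ := by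
  rw [← Real.rpow_natCast, ← Real.rpow_mul hr.le,
    show ((2 : ℕ) : ℝ) * (-(3 : ℝ) / 2) = -((3 : ℕ) : ℝ) by norm_num,
    Real.rpow_neg hr.le, Real.rpow_natCast]

/-- The integrand `|E₁ + E₂ + E₃| + E₄` of `log T`, with `a + b i = V - Ṽ`, `d = Re (V - Ṽ)'`
and `w = Im V`. -/
noncomputable def tMethodIntegrand (α β U a b d w g : ℝ) : ℝ :=
  |1 / (2 * |U|) * (4 * α * a + d) + β / |U| * b - w / |U| * (a / (Real.sqrt |U| + β))|
    + |w| / Real.sqrt |U| * g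

theorem sub_sq_le_neg_sq_div_four {r κ a β : ℝ} (hr : 0 < r) (hκ : κ ≤ r ^ 4 / 64)
    (ha : |a| ≤ κ / r ^ 2) (hβ : 2 * r / 3 ≤ β) : a - β ^ 2 ≤ -(r ^ 2 / 4) := by
  have ha' : a ≤ r ^ 2 / 64 := by
    refine (le_abs_self a).trans (ha.trans ?_)
    rw [div_le_iff₀ (by positivity)]
    linarith
  nlinarith

theorem tMethodIntegrand_le {r κ α β U a b d w g : ℝ} (hr : 0 < r) (hκ : 0 ≤ κ)
    (hU : r ^ 2 / 4 ≤ |U|) (hα : |α| ≤ 2 * r) (hβ : 2 * r / 3 ≤ β) (hβ' : β ≤ 2 * r)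
    (ha : |a| ≤ κ / r ^ 2) (hb : |b| ≤ κ / r ^ 2) (hd : |d| ≤ κ / r) (hw : |w| ≤ r ^ 2)
    (hwg : |w| * g ≤ 18 * κ / r ^ 2) :
    tMethodIntegrand α β U a b d w g ≤ 100 * κ / r ^ 3 := by
  have hU₀ : 0 < |U| := lt_of_lt_of_le (by positivity) hU
  have hsU : r / 2 ≤ Real.sqrt |U| := (Real.le_sqrt (by positivity) hU₀.le).2 (by linarith)
  have hβ₀ : 0 < β := by linarith
  have hE₁ : |1 / (2 * |U|) * (4 * α * a + d)| ≤ 18 * (κ / r ^ 3) := by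
    have hnum : |4 * α * a + d| ≤ 9 * κ / r :=
      calc |4 * α * a + d| ≤ 4 * |α| * |a| + |d| := by
            refine (abs_add_le _ _).trans_eq ?_
            rw [abs_mul, abs_mul, abs_of_pos four_pos]
        _ ≤ 4 * (2 * r) * (κ / r ^ 2) + κ / r := by gcongr
        _ = 9 * κ / r := by field_simp; ring
    calc |1 / (2 * |U|) * (4 * α * a + d)| = |4 * α * a + d| / (2 * |U|) := by
          rw [abs_mul, abs_div, abs_one, abs_mul, abs_two, abs_abs]; ring
      _ ≤ 9 * κ / r / (2 * (r ^ 2 / 4)) := by gcongr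
      _ = 18 * (κ / r ^ 3) := by field_simp; ring
  have hE₂ : |β / |U| * b| ≤ 8 * (κ / r ^ 3) :=
    calc |β / |U| * b| = β / |U| * |b| := by rw [abs_mul, abs_div, abs_abs, abs_of_pos hβ₀]
      _ ≤ 2 * r / (r ^ 2 / 4) * (κ / r ^ 2) := by gcongr
      _ = 8 * (κ / r ^ 3) := by field_simp; ring
  have hE₃ : |w / |U| * (a / (Real.sqrt |U| + β))| ≤ 6 * (κ / r ^ 3) :=
    calc |w / |U| * (a / (Real.sqrt |U| + β))| = |w| / |U| * (|a| / (Real.sqrt |U| + β)) := by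
          simp only [abs_mul, abs_div, abs_abs]
          rw [abs_of_pos (add_pos_of_nonneg_of_pos (Real.sqrt_nonneg _) hβ₀)]
      _ ≤ r ^ 2 / (r ^ 2 / 4) * (κ / r ^ 2 / (2 * r / 3)) := by
          gcongr
          linarith [Real.sqrt_nonneg |U|]
      _ = 6 * (κ / r ^ 3) := by field_simp; ring
  have hE₄ : |w| / Real.sqrt |U| * g ≤ 36 * (κ / r ^ 3) :=
    calc |w| / Real.sqrt |U| * g = |w| * g / Real.sqrt |U| := by ring
      _ ≤ 18 * κ / r ^ 2 / (r / 2) := by gcongr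
      _ = 36 * (κ / r ^ 3) := by field_simp; ring
  have hκr : 0 ≤ κ / r ^ 3 := by positivity
  calc tMethodIntegrand α β U a b d w g
      ≤ |1 / (2 * |U|) * (4 * α * a + d)| + |β / |U| * b|
        + |w / |U| * (a / (Real.sqrt |U| + β))| + |w| / Real.sqrt |U| * g := by
        unfold tMethodIntegrand
        gcongr
        refine (abs_sub _ _).trans ?_
        gcongr
        exact abs_add_le _ _
    _ ≤ 100 * (κ / r ^ 3) := by linarith
    _ = 100 * κ / r ^ 3 := by ring

theorem sInf_image_norm_pos {V : ℝ → ℂ} {a b : ℝ} (hab : a ≤ b) (hV : ContinuousOn V (Icc a b))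
    (hV₀ : ∀ t ∈ Icc a b, V t ≠ 0) : 0 < sInf ((fun t => ‖V t‖) '' Icc a b) := by
  obtain ⟨t, ht, hmin⟩ := (isCompact_Icc.image_of_continuousOn hV.norm).sInf_mem
    ((nonempty_Icc.2 hab).image _)
  rw [← hmin]
  exact norm_pos_iff.2 (hV₀ t ht)

theorem sInf_image_norm_le {V : ℝ → ℂ} {s : Set ℝ} {t : ℝ} (ht : t ∈ s) :
    sInf ((fun t => ‖V t‖) '' s) ≤ ‖V t‖ :=
  csInf_le ⟨0, by rintro _ ⟨_, _, rfl⟩; positivity⟩ (mem_image_of_mem _ ht)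

theorem intervalIntegral.integral_mono_on_of_nonneg {f g : ℝ → ℝ} {a b : ℝ} (hab : a ≤ b)
    (hf : 0 ≤ f) (hg : MeasureTheory.IntegrableOn g (Icc a b))
    (hfg : ∀ x ∈ Icc a b, f x ≤ g x) : ∫ x in a..b, f x ≤ ∫ x in a..b, g x := by
  rw [intervalIntegral.integral_of_le hab, intervalIntegral.integral_of_le hab]
  refine MeasureTheory.integral_mono_of_nonneg (.of_forall hf) (hg.mono_set Ioc_subset_Icc_self)
    ((MeasureTheory.ae_restrict_iff' measurableSet_Ioc).2 (.of_forall fun x hx => ?_))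
  exact hfg x (Ioc_subset_Icc_self hx)

theorem wkbU_neg_and_tMethodIntegrand_le {z₀ z₁ z₂ z₃ zt s : ℂ} {ε m α β U d g : ℝ}
    (hε₀ : 0 < ε) (hε : ε < 1 / 8) (hm : 0 < m) (hmz : m ≤ ‖z₀‖)
    (h₁ : ‖z₁‖ ≤ ε * m ^ ((3 : ℝ) / 2)) (h₂ : ‖z₂‖ ≤ ε ^ 2 * m ^ 2)
    (h₃ : ‖z₃‖ ≤ ε ^ 3 * m ^ ((5 : ℝ) / 2)) (hs : s ^ 2 = z₀) (hbr : |s.re| ≤ s.im)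
    (hzt : zt = z₀ + 5 * z₁ ^ 2 / (16 * z₀ ^ 2) - z₂ / (4 * z₀))
    (hα : α = (s - z₁ / (4 * z₀)).re) (hβ : β = (s - z₁ / (4 * z₀)).im)
    (hU : U = (z₀ - zt).re - β ^ 2) (hd : d = (wkbDefectDeriv z₀ z₁ z₂ z₃).re)
    (hg : g = 18 * ε ^ 2 * m ^ 2 / (‖z₀‖ * |z₀.im|)) :
    U < 0 ∧ tMethodIntegrand α β U (z₀ - zt).re (z₀ - zt).im d z₀.im g
      ≤ 100 * ε ^ 2 * m ^ 2 * ‖z₀‖ ^ (-(3 : ℝ) / 2) := by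
  obtain ⟨r, hr, hz₀⟩ : ∃ r, 0 < r ∧ ‖z₀‖ = r ^ 2 :=
    ⟨√‖z₀‖, Real.sqrt_pos.2 (hm.trans_le hmz), (Real.sq_sqrt (norm_nonneg _)).symm⟩
  have hmr : m ≤ r ^ 2 := hz₀ ▸ hmz
  set e := ε * √m with he_def
  obtain ⟨h₁', h₂', h₃'⟩ := le_mul_sqrt_pow_mul_of_le_rpow hm.le h₁ h₂ h₃
  have hκ : e ^ 2 * m = ε ^ 2 * m ^ 2 := by rw [he_def, mul_pow, Real.sq_sqrt hm.le]; ring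
  have he : 0 ≤ e := by positivity
  have her : e ≤ r / 8 :=
    calc e ≤ 1 / 8 * r := mul_le_mul hε.le ((Real.sqrt_le_left hr.le).2 hmr)
          (Real.sqrt_nonneg _) (by norm_num)
      _ = r / 8 := by ring
  have hD : z₀ - zt = wkbDefect z₀ z₁ z₂ := by rw [hzt, wkbDefect]; ring
  have hDle := norm_wkbDefect_le hr hz₀ hm.le hmr h₁' h₂'
  have ha : |(z₀ - zt).re| ≤ e ^ 2 * m / r ^ 2 := hD ▸ (Complex.abs_re_le_norm _).trans hDle
  have hb : |(z₀ - zt).im| ≤ e ^ 2 * m / r ^ 2 := hD ▸ (Complex.abs_im_le_norm _).trans hDle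
  have hd' : |d| ≤ e ^ 2 * m / r := hd ▸ (Complex.abs_re_le_norm _).trans
    (norm_wkbDefectDeriv_le hr hz₀ hm.le hmr he her h₁' h₂' h₃')
  have hsr : ‖s‖ = r := by
    refine (pow_left_inj₀ (norm_nonneg _) hr.le two_ne_zero).1 ?_
    rw [← norm_pow, hs, hz₀]
  obtain ⟨hβlo, hβhi, hα'⟩ := re_im_sub_bounds_of_abs_re_le hsr hbr
    (norm_div_four_mul_le hr hz₀ hmr he her h₁')
  rw [← hα] at hα'
  rw [← hβ] at hβlo hβhi
  have hκr : e ^ 2 * m ≤ r ^ 4 / 64 :=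
    calc e ^ 2 * m ≤ (r / 8) ^ 2 * r ^ 2 := by gcongr
      _ = r ^ 4 / 64 := by ring
  have hUle : U ≤ -(r ^ 2 / 4) := hU ▸ sub_sq_le_neg_sq_div_four hr hκr ha hβlo
  have hUabs : r ^ 2 / 4 ≤ |U| := by rw [abs_of_neg (by linarith [sq_pos_of_pos hr])]; linarith
  have hwg : |z₀.im| * g ≤ 18 * (e ^ 2 * m) / r ^ 2 :=
    calc |z₀.im| * g = |z₀.im| * (18 * (e ^ 2 * m) / (r ^ 2 * |z₀.im|)) := by
          rw [hg, hz₀, hκ, mul_assoc 18]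
      _ ≤ 18 * (e ^ 2 * m) / r ^ 2 := abs_mul_div_mul_abs_le (by positivity) (by positivity)
  refine ⟨by linarith [sq_pos_of_pos hr], ?_⟩
  calc tMethodIntegrand α β U (z₀ - zt).re (z₀ - zt).im d z₀.im g
      ≤ 100 * (e ^ 2 * m) / r ^ 3 :=
        tMethodIntegrand_le hr (by positivity) hUabs hα' hβlo hβhi ha hb hd'
          (hz₀ ▸ Complex.abs_im_le_norm z₀) hwg
    _ = 100 * ε ^ 2 * m ^ 2 * ‖z₀‖ ^ (-(3 : ℝ) / 2) := by
        rw [hz₀, sq_rpow_neg_three_halves hr, hκ]; ring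

theorem wkb_T_estimate_imV_neg_general
    (u₀ u₁ umax : ℝ) (h1m : u₁ ≤ umax)
    (V V' V'' V''' : ℝ → ℂ)
    (hV1 : ∀ u ∈ Icc u₀ umax, HasDerivAt V (V' u) u)
    (hV2 : ∀ u ∈ Icc u₀ umax, HasDerivAt V' (V'' u) u)
    (hV3 : ∀ u ∈ Icc u₀ umax, HasDerivAt V'' (V''' u) u)
    (hVne : ∀ u ∈ Icc u₀ umax, V u ≠ 0)
    (ε : ℝ) (hε0 : 0 < ε) (hε : ε < 1 / 8)
    (hc1 : ∀ u ∈ Icc u₀ umax, ‖V' u‖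
      ≤ ε * sInf ((fun t => ‖V t‖) '' Icc u₀ umax) ^ ((3 : ℝ) / 2))
    (hc2 : ∀ u ∈ Icc u₀ umax, ‖V'' u‖
      ≤ ε ^ 2 * sInf ((fun t => ‖V t‖) '' Icc u₀ umax) ^ 2)
    (hc3 : ∀ u ∈ Icc u₀ umax, ‖V''' u‖
      ≤ ε ^ 3 * sInf ((fun t => ‖V t‖) '' Icc u₀ umax) ^ ((5 : ℝ) / 2))
    -- (ii) branch condition on J
    (sqrtV : ℝ → ℂ)
    (hsq : ∀ u ∈ Icc u₀ u₁, sqrtV u ^ 2 = V u)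
    (hbranch : ∀ u ∈ Icc u₀ u₁, 0 ≤ (sqrtV u).re ∧ (sqrtV u).re < (sqrtV u).im)
    -- WKB data
    (Vt : ℝ → ℂ)
    (hVt : ∀ u, Vt u = V u + 5 * (V' u) ^ 2 / (16 * (V u) ^ 2) - V'' u / (4 * V u))
    (α βt U : ℝ → ℝ)
    (hα : ∀ u, α u = (sqrtV u - V' u / (4 * V u)).re)
    (hβt : ∀ u, βt u = (sqrtV u - V' u / (4 * V u)).im)
    (hU : ∀ u, U u = (V u - Vt u).re - βt u ^ 2)
    (W' : ℝ → ℝ)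
    (hW' : ∀ u ∈ Icc u₀ u₁, HasDerivAt (fun t => (V t - Vt t).re) (W' u) u)
    (g : ℝ → ℝ)
    (hgdef : ∀ u, g u = 18 * ε ^ 2
      * sInf ((fun t => ‖V t‖) '' Icc u₀ umax) ^ 2
      / (‖V u‖ * |(V u).im|))
    (T : ℝ → ℝ)
    (hT : ∀ u, T u = Real.exp (∫ t in u₀..u,
      |1 / (2 * |U t|) * (4 * α t * (V t - Vt t).re + W' t)
        + βt t / |U t| * (V t - Vt t).im
        - (V t).im / |U t| * ((V t - Vt t).re / (Real.sqrt |U t| + βt t))|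
      + |(V t).im| / Real.sqrt |U t| * g t)) :
    ∀ u ∈ Icc u₀ u₁,
      U u < 0 ∧
      ((0 ≤ (V u).im → -((T u - 1) / T u) ≤ g u) ∧ ((V u).im < 0 → T u - 1 ≤ g u)) ∧
      Real.log (T u)
        ≤ 100 * ε ^ 2 * sInf ((fun t => ‖V t‖) '' Icc u₀ umax) ^ 2
          * ∫ t in u₀..u, ‖V t‖ ^ (-(3 : ℝ) / 2) := by
  intro u hu
  set m := sInf ((fun t => ‖V t‖) '' Icc u₀ umax)
  set F := fun t => tMethodIntegrand (α t) (βt t) (U t) (V t - Vt t).re (V t - Vt t).im (W' t)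
    (V t).im (g t)
  have hVc : ContinuousOn V (Icc u₀ umax) := fun t ht => (hV1 t ht).continuousAt.continuousWithinAt
  have hm : 0 < m := sInf_image_norm_pos (hu.1.trans (hu.2.trans h1m)) hVc hVne
  have hpt (t) (ht : t ∈ Icc u₀ u₁) :
      U t < 0 ∧ F t ≤ 100 * ε ^ 2 * m ^ 2 * ‖V t‖ ^ (-(3 : ℝ) / 2) := by
    have htI : t ∈ Icc u₀ umax := ⟨ht.1, ht.2.trans h1m⟩
    obtain ⟨hre, hreim⟩ := hbranch t ht
    have hW't : W' t = (wkbDefectDeriv (V t) (V' t) (V'' t) (V''' t)).re :=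
      (hW' t ht).unique
        (hasDerivAt_re_wkbDefect hVt (hV1 t htI) (hV2 t htI) (hV3 t htI) (hVne t htI))
    exact wkbU_neg_and_tMethodIntegrand_le hε0 hε hm (sInf_image_norm_le htI) (hc1 t htI)
      (hc2 t htI) (hc3 t htI) (hsq t ht) ((abs_of_nonneg hre).trans_le hreim.le)
      (hVt t) (hα t) (hβt t) (hU t) hW't (hgdef t)
  have hg₀ (t) : 0 ≤ g t := by rw [hgdef]; positivity
  have hF₀ : 0 ≤ F := fun t => by unfold F tMethodIntegrand; have := hg₀ t; positivity
  have hlogT : Real.log (T u) = ∫ t in u₀..u, F t := by rw [hT, Real.log_exp]; rfl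
  have hT₁ : 1 ≤ T u := by
    rw [hT]; exact Real.one_le_exp (intervalIntegral.integral_nonneg hu.1 fun t _ => hF₀ t)
  refine ⟨(hpt u hu).1, ⟨fun _ => ?_, fun him => ?_⟩, ?_⟩
  · have : 0 ≤ (T u - 1) / T u := div_nonneg (by linarith) (by linarith)
    linarith [hg₀ u]
  · obtain ⟨hre, hreim⟩ := hbranch u hu
    exact absurd him (not_lt.2 (hsq u hu ▸ im_sq_nonneg_of_nonneg hre (hre.trans hreim.le)))
  · rw [hlogT, ← intervalIntegral.integral_const_mul]
    refine intervalIntegral.integral_mono_on_of_nonneg hu.1 hF₀ ?_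
      fun t ht => (hpt t ⟨ht.1, ht.2.trans hu.2⟩).2
    have huI : Icc u₀ u ⊆ Icc u₀ umax := Icc_subset_Icc_right (hu.2.trans h1m)
    exact (continuousOn_const.mul ((hVc.mono huI).norm.rpow_const fun t ht =>
      .inl (norm_ne_zero_iff.2 (hVne t (huI ht))))).integrableOn_Icc

/-- **WKB T-estimate allowing `Im V < 0`** (Lemma 4.3).
On `I = [u₀, u_max]` with subinterval `J = [u₀, u₁]`, for a `C³` nonvanishing
potential satisfying the semiclassical bounds with `ε < 1/8`, the weak concavity
condition (i), the branch condition (ii) `Im √V > Re √V ≥ 0` on `J`, and the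
size conditions (iii), (iv), the T-method (Theorem 3.3) applies on `J` with
`T(u₀) = 1` and `g = 18 ε² (inf_I|V|)²/(|V|·|Im V|)`: indeed `U < 0` on `J`, the
compatibility condition for `g` holds, and
`log T(u) ≤ 100 ε² (inf_I |V|)² ∫_{u₀}^u |V|^{-3/2}` for all `u ∈ J`. -/
theorem wkb_T_estimate_imV_neg
    (u₀ u₁ umax : ℝ) (h01 : u₀ ≤ u₁) (h1m : u₁ ≤ umax)
    (V V' V'' V''' : ℝ → ℂ)
    (hV1 : ∀ u ∈ Icc u₀ umax, HasDerivAt V (V' u) u)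
    (hV2 : ∀ u ∈ Icc u₀ umax, HasDerivAt V' (V'' u) u)
    (hV3 : ∀ u ∈ Icc u₀ umax, HasDerivAt V'' (V''' u) u)
    (hVne : ∀ u ∈ Icc u₀ umax, V u ≠ 0)
    (ε : ℝ) (hε0 : 0 < ε) (hε : ε < 1 / 8)
    (hc1 : ∀ u ∈ Icc u₀ umax, ‖V' u‖
      ≤ ε * sInf ((fun t => ‖V t‖) '' Icc u₀ umax) ^ ((3 : ℝ) / 2))
    (hc2 : ∀ u ∈ Icc u₀ umax, ‖V'' u‖
      ≤ ε ^ 2 * sInf ((fun t => ‖V t‖) '' Icc u₀ umax) ^ 2)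
    (hc3 : ∀ u ∈ Icc u₀ umax, ‖V''' u‖
      ≤ ε ^ 3 * sInf ((fun t => ‖V t‖) '' Icc u₀ umax) ^ ((5 : ℝ) / 2))
    -- (i) weak concavity of |V| on [u₀, u] for each u ∈ J
    (hconc : ∀ u ∈ Icc u₀ u₁, ∀ τ ∈ Icc u₀ u,
      (τ - u₀) / (u - u₀) * ‖V u‖
        + (u - τ) / (u - u₀) * ‖V u₀‖ ≤ ‖V τ‖)
    -- (ii) branch condition on J
    (sqrtV : ℝ → ℂ)
    (hsq : ∀ u ∈ Icc u₀ u₁, sqrtV u ^ 2 = V u)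
    (hbranch : ∀ u ∈ Icc u₀ u₁, 0 ≤ (sqrtV u).re ∧ (sqrtV u).re < (sqrtV u).im)
    -- (iii)
    (hVl : ∀ u ∈ Icc u₀ u₁,
      200 * ε ^ 2 * (u₁ - u₀) * sInf ((fun t => ‖V t‖) '' Icc u₀ umax) ^ 2
          / ‖V u₀‖
        ≤ Real.sqrt (‖V u‖))
    -- (iv)
    (hJu : ∀ u ∈ Icc u₀ u₁,
      (u₁ - u₀) * |(V u).im| * Real.sqrt (‖V u‖) ≤ ‖V u₀‖ / 30)
    -- WKB data
    (Vt : ℝ → ℂ)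
    (hVt : ∀ u, Vt u = V u + 5 * (V' u) ^ 2 / (16 * (V u) ^ 2) - V'' u / (4 * V u))
    (α βt U : ℝ → ℝ)
    (hα : ∀ u, α u = (sqrtV u - V' u / (4 * V u)).re)
    (hβt : ∀ u, βt u = (sqrtV u - V' u / (4 * V u)).im)
    (hU : ∀ u, U u = (V u - Vt u).re - βt u ^ 2)
    (W' : ℝ → ℝ)
    (hW' : ∀ u ∈ Icc u₀ u₁, HasDerivAt (fun t => (V t - Vt t).re) (W' u) u)
    (g : ℝ → ℝ)
    (hgdef : ∀ u, g u = 18 * ε ^ 2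
      * sInf ((fun t => ‖V t‖) '' Icc u₀ umax) ^ 2
      / (‖V u‖ * |(V u).im|))
    (T : ℝ → ℝ)
    (hT : ∀ u, T u = Real.exp (∫ t in u₀..u,
      |1 / (2 * |U t|) * (4 * α t * (V t - Vt t).re + W' t)
        + βt t / |U t| * (V t - Vt t).im
        - (V t).im / |U t| * ((V t - Vt t).re / (Real.sqrt |U t| + βt t))|
      + |(V t).im| / Real.sqrt |U t| * g t)) :
    ∀ u ∈ Icc u₀ u₁,
      U u < 0 ∧
      ((0 ≤ (V u).im → -((T u - 1) / T u) ≤ g u) ∧ ((V u).im < 0 → T u - 1 ≤ g u)) ∧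
      Real.log (T u)
        ≤ 100 * ε ^ 2 * sInf ((fun t => ‖V t‖) '' Icc u₀ umax) ^ 2
          * ∫ t in u₀..u, ‖V t‖ ^ (-(3 : ℝ) / 2) :=
  wkb_T_estimate_imV_neg_general u₀ u₁ umax h1m V V' V'' V''' hV1 hV2 hV3 hVne ε hε0 hε hc1 hc2 hc3
    sqrtV hsq hbranch Vt hVt α βt U hα hβt hU W' hW' g hgdef T hT
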